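/- arXiv:2407.02624 — 4 statements merged into one kernel-verified Lean document; each statement's English description precedes it below -/
import Mathlib

section
/- For any information graph G = (V, E, α) and any three vertices u, v, w of G, the proximities satisfy the multiplicative triangle inequality prox_G(u, v) ≥ prox_G(u, w) · prox_G(w, v). Consequently, the function φ(u, v) = −log prox_G(u, v) satisfies the triangle inequality, so (V, φ) is a (pseudo)metric space, called the implied metric of G. -/
open scoped Classical

variable {V : Type*} [Fintype V] [DecidableEq V]

/-- The proximity of `u` and `v` in the information graph `(V, E, α)`: the probability
that `u` and `v` are connected in a graph obtained by retaining each edge of `E`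
independently with probability `α`. -/
noncomputable def prox (E : Finset (Sym2 V)) (α : ℝ) (u v : V) : ℝ :=
  ∑ F ∈ E.powerset,
    if (SimpleGraph.fromEdgeSet (F : Set (Sym2 V))).Reachable u v then
      α ^ F.card * (1 - α) ^ (E \ F).card
    else 0

/-- The broadcast of an information graph: the minimum proximity over pairs of distinct
vertices. -/
noncomputable def broadcast (E : Finset (Sym2 V)) (α : ℝ) : ℝ :=
  ⨅ p : {p : V × V // p.1 ≠ p.2}, prox E α p.1.1 p.1.2

/-- The optimum broadcast achievable by adding at most `k` vertex pairs disjoint from `E`. -/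
noncomputable def optBroadcast (E : Finset (Sym2 V)) (α : ℝ) (k : ℕ) : ℝ :=
  ⨆ F : {F : Finset (Sym2 V) // F.card ≤ k ∧ ∀ e ∈ F, e ∉ E}, broadcast (E ∪ F.1) α

/-- The reach of a vertex `v`: the minimum proximity of `v` to any other vertex. -/
noncomputable def reach (E : Finset (Sym2 V)) (α : ℝ) (v : V) : ℝ :=
  ⨅ u : {u : V // u ≠ v}, prox E α v u.1

/-- The optimum reach of a source vertex `vs` achievable by adding at most `k`
vertex pairs disjoint from `E`. -/
noncomputable def optReach (E : Finset (Sym2 V)) (α : ℝ) (k : ℕ) (vs : V) : ℝ :=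
  ⨆ F : {F : Finset (Sym2 V) // F.card ≤ k ∧ ∀ e ∈ F, e ∉ E}, reach (E ∪ F.1) α vs

/-- The probability that, in a sampled graph, all edges of at least one member of the
family `P` of edge-lists are retained. -/
noncomputable def prPaths (E : Finset (Sym2 V)) (α : ℝ) (P : Set (List (Sym2 V))) : ℝ :=
  ∑ F ∈ E.powerset,
    if ∃ p ∈ P, ∀ e ∈ p, e ∈ F then α ^ F.card * (1 - α) ^ (E \ F).card
    else 0

/-!
Sample the edge set `F ⊆ E` by keeping each edge independently with probability `α`. The events
"`u` and `v` are connected in `(V, F)`" are increasing in `F`, and the product measure on subsets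
of `E` is log-supermodular (with equality), so the Harris–FKG inequality makes the events
`u ~ w` and `w ~ v` positively correlated. Both together imply `u ~ v`, hence
`prox(u, w) · prox(w, v) ≤ P(u ~ w ∧ w ~ v) ≤ prox(u, v)`; taking `-log` gives the triangle
inequality for the implied metric.
-/

open Finset

section Sampling

variable {β : Type*} [DecidableEq β] (E : Finset β) (α : ℝ)

noncomputable def sampleProb (A : Finset β → Prop) [DecidablePred A] : ℝ :=
  ∑ F ∈ E.powerset, if A F then α ^ #F * (1 - α) ^ #(E \ F) else 0

/-- Extended by zero to all of `Finset β`, so that the FKG inequality on that lattice applies. -/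
noncomputable def sampleWeight (F : Finset β) : ℝ :=
  if F ⊆ E then α ^ #F * (1 - α) ^ #(E \ F) else 0

variable {E α}

theorem sampleWeight_nonneg (hα0 : 0 ≤ α) (hα1 : α ≤ 1) (F : Finset β) :
    0 ≤ sampleWeight E α F := by
  unfold sampleWeight
  split_ifs
  · exact mul_nonneg (pow_nonneg hα0 _) (pow_nonneg (sub_nonneg.2 hα1) _)
  · exact le_rfl

theorem sampleWeight_mul_le (hα0 : 0 ≤ α) (hα1 : α ≤ 1) (S T : Finset β) :
    sampleWeight E α S * sampleWeight E α T ≤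
      sampleWeight E α (S ⊓ T) * sampleWeight E α (S ⊔ T) := by
  by_cases hS : S ⊆ E
  · by_cases hT : T ⊆ E
    · have hcard : #(S ∩ T) + #(S ∪ T) = #S + #T := by
        rw [add_comm, card_union_add_card_inter]
      have hcard' : #(E \ (S ∩ T)) + #(E \ (S ∪ T)) = #(E \ S) + #(E \ T) := by
        rw [sdiff_inter_distrib_right, sdiff_union_distrib, card_union_add_card_inter]
      simp only [sampleWeight, hS, hT, inf_eq_inter, sup_eq_union, inter_subset_left.trans hS,
        union_subset hS hT, if_true]
      apply le_of_eq
      calc _ = α ^ (#S + #T) * (1 - α) ^ (#(E \ S) + #(E \ T)) := by ring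
        _ = _ := by rw [← hcard, ← hcard']; ring
    · simp only [sampleWeight, hT, if_false, mul_zero]
      exact mul_nonneg (sampleWeight_nonneg hα0 hα1 _) (sampleWeight_nonneg hα0 hα1 _)
  · simp only [sampleWeight, hS, if_false, zero_mul]
    exact mul_nonneg (sampleWeight_nonneg hα0 hα1 _) (sampleWeight_nonneg hα0 hα1 _)

variable [Fintype β]

theorem sampleProb_eq_sum_sampleWeight (A : Finset β → Prop) [DecidablePred A] :
    sampleProb E α A = ∑ F, sampleWeight E α F * if A F then 1 else 0 := by
  simp only [sampleProb, sampleWeight, mul_boole, ← filter_subset_univ E, sum_filter]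
  exact sum_congr rfl fun F _ => by split_ifs <;> rfl

theorem sum_sampleWeight : ∑ F, sampleWeight E α F = 1 := by
  calc ∑ F, sampleWeight E α F = ∑ F ∈ E.powerset, α ^ #F * (1 - α) ^ (#E - #F) := by
        simp only [sampleWeight, ← filter_subset_univ E, sum_filter]
        refine sum_congr rfl fun F _ => ?_
        split_ifs with hF
        · rw [card_sdiff_of_subset hF]
        · rfl
    _ = 1 := by rw [sum_pow_mul_eq_add_pow, add_sub_cancel, one_pow]

theorem sampleProb_mono (hα0 : 0 ≤ α) (hα1 : α ≤ 1) {A B : Finset β → Prop}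
    [DecidablePred A] [DecidablePred B] (h : ∀ F, A F → B F) :
    sampleProb E α A ≤ sampleProb E α B := by
  simp only [sampleProb_eq_sum_sampleWeight]
  refine sum_le_sum fun F _ => mul_le_mul_of_nonneg_left ?_ (sampleWeight_nonneg hα0 hα1 F)
  by_cases hA : A F
  · simp [hA, h F hA]
  · split_ifs <;> norm_num

/-- **Harris inequality**: increasing events are positively correlated. -/
theorem sampleProb_mul_le_sampleProb_and (hα0 : 0 ≤ α) (hα1 : α ≤ 1)
    {A B : Finset β → Prop} [DecidablePred A] [DecidablePred B] (hA : Monotone A) (hB : Monotone B) :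
    sampleProb E α A * sampleProb E α B ≤ sampleProb E α fun F => A F ∧ B F := by
  have indicator_nonneg (C : Finset β → Prop) [DecidablePred C] :
      0 ≤ fun F => if C F then (1 : ℝ) else 0 := fun F => by
    by_cases hC : C F <;> simp [hC]
  have indicator_mono {C : Finset β → Prop} [DecidablePred C] (hC : Monotone C) :
      Monotone fun F => if C F then (1 : ℝ) else 0 := fun S T hST => by
    by_cases hS : C S
    · simp [hS, hC hST hS]
    · by_cases hT : C T <;> simp [hS, hT]
  have := fkg _ _ (sampleWeight E α) (sampleWeight_nonneg hα0 hα1) (indicator_nonneg A)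
    (indicator_nonneg B) (indicator_mono hA) (indicator_mono hB) (sampleWeight_mul_le hα0 hα1)
  simpa only [sampleProb_eq_sum_sampleWeight, sum_sampleWeight, one_mul, ite_zero_mul_ite_zero,
    mul_one] using this

end Sampling

open SimpleGraph in
theorem prox_eq_sampleProb (E : Finset (Sym2 V)) (α : ℝ) (u v : V) :
    prox E α u v = sampleProb E α fun F => (fromEdgeSet (F : Set (Sym2 V))).Reachable u v :=
  rfl

open SimpleGraph in
theorem prox_mul_prox_le (E : Finset (Sym2 V)) {α : ℝ} (hα0 : 0 ≤ α) (hα1 : α ≤ 1)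
    (u v w : V) : prox E α u w * prox E α w v ≤ prox E α u v := by
  have reachable_mono (a b : V) :
      Monotone fun F : Finset (Sym2 V) => (fromEdgeSet (F : Set (Sym2 V))).Reachable a b :=
    fun _ _ hST h => h.mono (fromEdgeSet_mono (coe_subset.2 hST))
  simp only [prox_eq_sampleProb]
  exact (sampleProb_mul_le_sampleProb_and hα0 hα1 (reachable_mono u w) (reachable_mono w v)).trans
    (sampleProb_mono hα0 hα1 fun _ h => h.1.trans h.2)

/-- multiplicative triangle inequality for proximity, and the
resulting triangle inequality for the implied metric `φ(u,v) = -log prox(u,v)`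
(stated for pairs with positive proximity, as is the case e.g. when `G` is
connected and `α > 0`). -/
theorem prox_mul_triangle_and_implied_metric
    (E : Finset (Sym2 V)) (α : ℝ) (hα0 : 0 ≤ α) (hα1 : α ≤ 1) :
    (∀ u v w : V, prox E α u w * prox E α w v ≤ prox E α u v) ∧
    (∀ u v w : V, 0 < prox E α u w → 0 < prox E α w v →
      -Real.log (prox E α u v) ≤
        -Real.log (prox E α u w) + -Real.log (prox E α w v)) := by
  refine ⟨prox_mul_prox_le E hα0 hα1, fun u v w huw hwv => ?_⟩
  have := Real.log_le_log (mul_pos huw hwv) (prox_mul_prox_le E hα0 hα1 u v w)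
  rw [Real.log_mul huw.ne' hwv.ne'] at this
  linarith
end

section
/- Weak fundamental inequality: Let G = (V, E, α) be an information graph, let i, j, u ∈ V be three vertices, and let 0 ≤ β ≤ 1. Let P_u be a set of simple paths from i to j in G, all of which pass through the vertex u, and let P_0 be another set of paths from i to j in G such that P_u ∩ P_0 = ∅ and Pr[P_u ∪ P_0] ≥ β. Suppose that Pr[P_0] ≤ β/2. Then Pr[P_u[i, u]] · Pr[P_u[u, j]] ≥ β/2, where P_u[i, u] is the set of segments p[i, u] (the portion of p from i to u) for p ∈ P_u, and P_u[u, j] is the set of segments p[u, j] for p ∈ P_u. -/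
/-!
Every path of `P` is simple, so its two segments are edge-disjoint: whenever some path of `P`
is retained, the events "some segment `p[i, u]` is retained" and "some segment `p[u, j]` is
retained" occur disjointly. The van den Berg–Kesten inequality bounds the probability of this
disjoint occurrence by `Pr[P[i, u]] · Pr[P[u, j]]`, and by the union bound
`Pr[P] ≥ Pr[P ∪ P₀] - Pr[P₀] ≥ β / 2`.

The BK inequality for the product measure is proved by splitting: sample two independent
configurations `F, F'` and, for `K ⊆ E`, ask for disjoint witnesses of `A` in `F` and of `B` in
the configuration that agrees with `F'` on `K` and with `F` off `K`. For `K = ∅` this is the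
disjoint occurrence; for `K = E` it implies two independent occurrences; and exchanging the
`e`-coordinates of `F` and `F'`, a measure-preserving involution, shows that the probability
does not decrease when `e` is added to `K`.
-/

open scoped Classical

variable {V : Type*} [Fintype V] [DecidableEq V]

namespace ProductBernoulli

variable {ι : Type*}

def Occurs (A : Set (Finset ι)) (F : Finset ι) : Prop :=
  ∃ S ∈ A, S ⊆ F

def OccursDisjointly (A B : Set (Finset ι)) (X Y : Finset ι) : Prop :=
  ∃ S ∈ A, ∃ T ∈ B, Disjoint S T ∧ S ⊆ X ∧ T ⊆ Y

lemma occurs_union {A B : Set (Finset ι)} {F : Finset ι} :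
    Occurs (A ∪ B) F ↔ Occurs A F ∨ Occurs B F := by
  simp only [Occurs, Set.mem_union, or_and_right, exists_or]

lemma OccursDisjointly.mono {A B : Set (Finset ι)} {X Y X' Y' : Finset ι}
    (h : OccursDisjointly A B X Y) (hX : X ⊆ X') (hY : Y ⊆ Y') : OccursDisjointly A B X' Y' := by
  obtain ⟨S, hS, T, hT, hST, hSX, hTY⟩ := h
  exact ⟨S, hS, T, hT, hST, hSX.trans hX, hTY.trans hY⟩

lemma occursDisjointly_of_occurs_union {κ : Type*} [DecidableEq ι] {P : Set κ}
    {f g : κ → Finset ι} (hfg : ∀ p ∈ P, Disjoint (f p) (g p)) {F : Finset ι}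
    (h : Occurs ((fun p => f p ∪ g p) '' P) F) : OccursDisjointly (f '' P) (g '' P) F F := by
  obtain ⟨-, ⟨p, hp, rfl⟩, hF⟩ := h
  exact ⟨f p, ⟨p, hp, rfl⟩, g p, ⟨p, hp, rfl⟩, hfg p hp, Finset.union_subset_left hF,
    Finset.union_subset_right hF⟩

variable [DecidableEq ι]

noncomputable def weight (E : Finset ι) (α : ℝ) (F : Finset ι) : ℝ :=
  α ^ F.card * (1 - α) ^ (E \ F).card

noncomputable def prob (E : Finset ι) (α : ℝ) (P : Finset ι → Prop) : ℝ :=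
  ∑ F ∈ E.powerset, if P F then weight E α F else 0

section Weight

variable {E F : Finset ι} {α : ℝ}

lemma weight_nonneg (h0 : 0 ≤ α) (h1 : α ≤ 1) (E F : Finset ι) : 0 ≤ weight E α F :=
  mul_nonneg (pow_nonneg h0 _) (pow_nonneg (sub_nonneg.2 h1) _)

lemma weight_eq_prod (hF : F ⊆ E) :
    weight E α F = ∏ x ∈ E, if x ∈ F then α else 1 - α := by
  rw [Finset.prod_ite, Finset.prod_const, Finset.prod_const, Finset.filter_mem_eq_inter,
    Finset.inter_eq_right.2 hF, Finset.filter_notMem_eq_sdiff, weight]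

lemma sum_weight (E : Finset ι) (α : ℝ) : ∑ F ∈ E.powerset, weight E α F = 1 := by
  simpa [weight] using (Finset.prod_add (fun _ => α) (fun _ => 1 - α) E).symm

lemma prob_mono (h0 : 0 ≤ α) (h1 : α ≤ 1) {P Q : Finset ι → Prop}
    (h : ∀ F ⊆ E, P F → Q F) : prob E α P ≤ prob E α Q := by
  refine Finset.sum_le_sum fun F hF => ?_
  have := weight_nonneg h0 h1 E F
  split_ifs <;> simp_all

lemma prob_or_le (h0 : 0 ≤ α) (h1 : α ≤ 1) (P Q : Finset ι → Prop) :
    prob E α (fun F => P F ∨ Q F) ≤ prob E α P + prob E α Q := by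
  rw [prob, prob, prob, ← Finset.sum_add_distrib]
  refine Finset.sum_le_sum fun F _ => ?_
  have := weight_nonneg h0 h1 E F
  split_ifs <;> simp_all

lemma prob_occurs_union_le (h0 : 0 ≤ α) (h1 : α ≤ 1) (A B : Set (Finset ι)) :
    prob E α (Occurs (A ∪ B)) ≤ prob E α (Occurs A) + prob E α (Occurs B) := by
  rw [show Occurs (A ∪ B) = fun F => Occurs A F ∨ Occurs B F from
    funext fun _ => propext occurs_union]
  exact prob_or_le h0 h1 (Occurs A) (Occurs B)

end Weight

section Splice

def splice (K F F' : Finset ι) : Finset ι :=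
  F \ K ∪ F' ∩ K

def exchange (K : Finset ι) (q : Finset ι × Finset ι) : Finset ι × Finset ι :=
  (splice K q.1 q.2, splice K q.2 q.1)

variable {K E F F' : Finset ι} {e : ι}

lemma mem_splice {x : ι} : x ∈ splice K F F' ↔ x ∈ F ∧ x ∉ K ∨ x ∈ F' ∧ x ∈ K := by
  simp [splice]

lemma mem_splice_of_notMem (he : e ∉ K) : e ∈ splice K F F' ↔ e ∈ F := by
  simp [mem_splice, he]

@[simp] lemma splice_empty (F F' : Finset ι) : splice ∅ F F' = F := by
  simp [splice]

lemma splice_eq_right (hF : F ⊆ K) (hF' : F' ⊆ K) : splice K F F' = F' := by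
  rw [splice, Finset.sdiff_eq_empty_iff_subset.2 hF, Finset.inter_eq_left.2 hF', Finset.empty_union]

lemma splice_subset (hF : F ⊆ E) (hF' : F' ⊆ E) : splice K F F' ⊆ E :=
  Finset.union_subset (Finset.sdiff_subset.trans hF) (Finset.inter_subset_left.trans hF')

lemma splice_singleton : splice {e} F F' = if e ∈ F' then insert e F else F.erase e := by
  ext x; split_ifs <;> by_cases x = e <;> simp_all [mem_splice]

lemma splice_insert : splice (insert e K) F F' = splice {e} (splice K F F') F' := by
  ext x; by_cases x = e <;> simp_all [mem_splice]

lemma splice_exchange_singleton (he : e ∉ K) :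
    splice K (exchange {e} (F, F')).1 (exchange {e} (F, F')).2 = splice (insert e K) F F' := by
  ext x; by_cases x = e <;> simp_all [exchange, mem_splice]

lemma splice_insert_exchange_singleton (he : e ∉ K) :
    splice (insert e K) (exchange {e} (F, F')).1 (exchange {e} (F, F')).2 = splice K F F' := by
  ext x; by_cases x = e <;> simp_all [exchange, mem_splice]

lemma exchange_involutive (K : Finset ι) : Function.Involutive (exchange K) := by
  intro q; ext x <;> by_cases x ∈ K <;> simp_all [exchange, mem_splice]

lemma exchange_mem_powerset_product {q : Finset ι × Finset ι}
    (hq : q ∈ E.powerset ×ˢ E.powerset) : exchange K q ∈ E.powerset ×ˢ E.powerset := by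
  simp only [Finset.mem_product, Finset.mem_powerset] at hq ⊢
  exact ⟨splice_subset hq.1 hq.2, splice_subset hq.2 hq.1⟩

lemma weight_mul_weight_exchange {α : ℝ} {q : Finset ι × Finset ι}
    (hq : q ∈ E.powerset ×ˢ E.powerset) :
    weight E α (exchange K q).1 * weight E α (exchange K q).2
      = weight E α q.1 * weight E α q.2 := by
  have hq' := exchange_mem_powerset_product (K := K) hq
  simp only [Finset.mem_product, Finset.mem_powerset] at hq hq'
  rw [weight_eq_prod hq.1, weight_eq_prod hq.2, weight_eq_prod hq'.1, weight_eq_prod hq'.2,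
    ← Finset.prod_mul_distrib, ← Finset.prod_mul_distrib]
  refine Finset.prod_congr rfl fun x _ => ?_
  by_cases x ∈ K <;> simp_all [exchange, mem_splice, mul_comm]

lemma sum_comp_exchange {M : Type*} [AddCommMonoid M] (g : Finset ι × Finset ι → M) :
    ∑ q ∈ E.powerset ×ˢ E.powerset, g (exchange K q) = ∑ q ∈ E.powerset ×ˢ E.powerset, g q :=
  Finset.sum_nbij' (exchange K) (exchange K) (fun _ => exchange_mem_powerset_product)
    (fun _ => exchange_mem_powerset_product) (fun q _ => exchange_involutive K q)
    (fun q _ => exchange_involutive K q) (fun _ _ => rfl)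

end Splice

section DisjointOccurrence

variable {A B : Set (Finset ι)} {X Y : Finset ι}

lemma OccursDisjointly.erase_or_erase (h : OccursDisjointly A B X Y) (e : ι) :
    OccursDisjointly A B X (Y.erase e) ∨ OccursDisjointly A B (X.erase e) Y := by
  obtain ⟨S, hS, T, hT, hST, hSX, hTY⟩ := h
  by_cases heT : e ∈ T
  · have heS : e ∉ S := fun heS => Finset.disjoint_left.1 hST heS heT
    exact Or.inr ⟨S, hS, T, hT, hST, Finset.subset_erase.2 ⟨hSX, heS⟩, hTY⟩
  · exact Or.inl ⟨S, hS, T, hT, hST, hSX, Finset.subset_erase.2 ⟨hTY, heT⟩⟩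

lemma ite_occursDisjointly_add_erase_le (X Y : Finset ι) (e : ι) {c : ℝ} (hc : 0 ≤ c) :
    (if OccursDisjointly A B X Y then c else 0)
        + (if OccursDisjointly A B (X.erase e) (Y.erase e) then c else 0)
      ≤ (if OccursDisjointly A B X (Y.erase e) then c else 0)
        + (if OccursDisjointly A B (X.erase e) Y then c else 0) := by
  have hsplit := fun h : OccursDisjointly A B X Y => h.erase_or_erase e
  have hleft := fun h : OccursDisjointly A B (X.erase e) (Y.erase e) =>
    h.mono (Finset.erase_subset e X) subset_rfl
  have hright := fun h : OccursDisjointly A B (X.erase e) (Y.erase e) =>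
    h.mono subset_rfl (Finset.erase_subset e Y)
  split_ifs <;> simp_all

lemma ite_occursDisjointly_add_splice_le {X Y : Finset ι} (Z : Finset ι) {e : ι}
    (hXY : e ∈ X ↔ e ∈ Y) {c : ℝ} (hc : 0 ≤ c) :
    (if OccursDisjointly A B X Y then c else 0)
        + (if OccursDisjointly A B (splice {e} X Z) (splice {e} Y Z) then c else 0)
      ≤ (if OccursDisjointly A B X (splice {e} Y Z) then c else 0)
        + (if OccursDisjointly A B (splice {e} X Z) Y then c else 0) := by
  simp only [splice_singleton]
  by_cases heZ : e ∈ Z <;> by_cases heX : e ∈ X <;> simp only [heZ, if_true, if_false]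
  · rw [Finset.insert_eq_of_mem heX, Finset.insert_eq_of_mem (hXY.1 heX)]
  · have heY : e ∉ Y := fun h => heX (hXY.2 h)
    have := ite_occursDisjointly_add_erase_le (A := A) (B := B) (insert e X) (insert e Y) e hc
    rw [Finset.erase_insert heX, Finset.erase_insert heY] at this
    linarith
  · exact ite_occursDisjointly_add_erase_le X Y e hc
  · rw [Finset.erase_eq_of_notMem heX, Finset.erase_eq_of_notMem (fun h => heX (hXY.2 h))]

end DisjointOccurrence

section Splitting

variable {E : Finset ι} {α : ℝ} (A B : Set (Finset ι))

noncomputable def splitProb (E : Finset ι) (α : ℝ) (K : Finset ι) : ℝ :=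
  ∑ q ∈ E.powerset ×ˢ E.powerset,
    if OccursDisjointly A B q.1 (splice K q.1 q.2) then weight E α q.1 * weight E α q.2 else 0

lemma splitProb_empty : splitProb A B E α ∅ = prob E α (fun F => OccursDisjointly A B F F) := by
  simp only [splitProb, splice_empty, Finset.sum_product, prob]
  refine Finset.sum_congr rfl fun F _ => ?_
  split_ifs <;> simp [← Finset.mul_sum, sum_weight]

lemma splitProb_le_splitProb_insert (h0 : 0 ≤ α) (h1 : α ≤ 1) {K : Finset ι} {e : ι}
    (he : e ∉ K) : splitProb A B E α K ≤ splitProb A B E α (insert e K) := by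
  set f : Finset ι → Finset ι × Finset ι → ℝ := fun K' q =>
    if OccursDisjointly A B q.1 (splice K' q.1 q.2) then weight E α q.1 * weight E α q.2 else 0
  have hpoint : ∀ q ∈ E.powerset ×ˢ E.powerset,
      f K q + f K (exchange {e} q) ≤ f (insert e K) q + f (insert e K) (exchange {e} q) := by
    rintro ⟨F, F'⟩ hq
    simp only [f]
    rw [weight_mul_weight_exchange hq, splice_exchange_singleton he,
      splice_insert_exchange_singleton he, splice_insert]
    exact ite_occursDisjointly_add_splice_le F' (mem_splice_of_notMem he).symm
      (mul_nonneg (weight_nonneg h0 h1 E F) (weight_nonneg h0 h1 E F'))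
  have hsum := Finset.sum_le_sum hpoint
  rw [Finset.sum_add_distrib, Finset.sum_add_distrib, sum_comp_exchange (f K),
    sum_comp_exchange (f (insert e K))] at hsum
  simp only [splitProb]
  linarith

lemma splitProb_empty_le (h0 : 0 ≤ α) (h1 : α ≤ 1) (K : Finset ι) :
    splitProb A B E α ∅ ≤ splitProb A B E α K := by
  induction K using Finset.induction_on with
  | empty => exact le_rfl
  | insert _ _ he ih => exact ih.trans (splitProb_le_splitProb_insert A B h0 h1 he)

lemma splitProb_self_le (h0 : 0 ≤ α) (h1 : α ≤ 1) :
    splitProb A B E α E ≤ prob E α (Occurs A) * prob E α (Occurs B) := by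
  rw [splitProb, prob, prob, Finset.sum_mul_sum, Finset.sum_product]
  refine Finset.sum_le_sum fun F hF => Finset.sum_le_sum fun F' hF' => ?_
  rw [Finset.mem_powerset] at hF hF'
  rw [splice_eq_right hF hF']
  have := weight_nonneg h0 h1 E F
  have := weight_nonneg h0 h1 E F'
  by_cases h : OccursDisjointly A B F F'
  · obtain ⟨S, hS, T, hT, -, hSF, hTF'⟩ := id h
    simp [h, show Occurs A F from ⟨S, hS, hSF⟩, show Occurs B F' from ⟨T, hT, hTF'⟩]
  · rw [if_neg h]; positivity

theorem prob_occursDisjointly_le_mul (h0 : 0 ≤ α) (h1 : α ≤ 1) :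
    prob E α (fun F => OccursDisjointly A B F F) ≤ prob E α (Occurs A) * prob E α (Occurs B) := by
  rw [← splitProb_empty]
  exact (splitProb_empty_le A B h0 h1 E).trans (splitProb_self_le A B h0 h1)

end Splitting

end ProductBernoulli

open ProductBernoulli

/-- Simple paths from `i` to `j` through `u` are encoded as pairs consisting of the segment
from `i` to `u` and the segment from `u` to `j` (walks in the complete graph whose edges lie in
`E`, appending to a simple path). -/
theorem weak_fundamental_inequality_general
    (E : Finset (Sym2 V)) (α : ℝ) (hα0 : 0 ≤ α) (hα1 : α ≤ 1)
    (i j u : V) (β : ℝ)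
    (P : Set ((⊤ : SimpleGraph V).Walk i u × (⊤ : SimpleGraph V).Walk u j))
    (P₀ : Set ((⊤ : SimpleGraph V).Walk i j))
    (hP : ∀ p ∈ P, (p.1.append p.2).IsPath ∧ ∀ e ∈ (p.1.append p.2).edges, e ∈ E)
    (hunion : β ≤ prPaths E α
      ((fun p => (p.1.append p.2).edges) '' P ∪ SimpleGraph.Walk.edges '' P₀))
    (hP₀small : prPaths E α (SimpleGraph.Walk.edges '' P₀) ≤ β / 2) :
    β / 2 ≤ prPaths E α ((fun p => p.1.edges) '' P) *
              prPaths E α ((fun p => p.2.edges) '' P) := by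
  have hprPaths : ∀ Q, prPaths E α Q = prob E α (Occurs (List.toFinset '' Q)) := fun Q => by
    simp [prPaths, prob, weight, Occurs, Finset.subset_iff]
  have hsegments : ∀ p ∈ P, Disjoint p.1.edges.toFinset p.2.edges.toFinset := fun p hp => by
    have hnodup := (hP p hp).1.isTrail.edges_nodup
    rw [SimpleGraph.Walk.edges_append] at hnodup
    exact List.disjoint_toFinset_iff_disjoint.2 (List.disjoint_of_nodup_append hnodup)
  have hpaths : List.toFinset '' ((fun p => (p.1.append p.2).edges) '' P)
      = (fun p => p.1.edges.toFinset ∪ p.2.edges.toFinset) '' P := by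
    simp only [Set.image_image, SimpleGraph.Walk.edges_append, List.toFinset_append]
  calc β / 2 ≤ prPaths E α ((fun p => (p.1.append p.2).edges) '' P) := by
        have := prob_occurs_union_le hα0 hα1 (E := E)
          (List.toFinset '' ((fun p => (p.1.append p.2).edges) '' P))
          (List.toFinset '' (SimpleGraph.Walk.edges '' P₀))
        rw [← Set.image_union, ← hprPaths, ← hprPaths, ← hprPaths] at this
        linarith
    _ ≤ prob E α (fun F => OccursDisjointly ((fun p => p.1.edges.toFinset) '' P)
          ((fun p => p.2.edges.toFinset) '' P) F F) := by
        rw [hprPaths, hpaths]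
        exact prob_mono hα0 hα1 fun F _ => occursDisjointly_of_occurs_union hsegments
    _ ≤ _ := prob_occursDisjointly_le_mul _ _ hα0 hα1
    _ = _ := by rw [hprPaths, hprPaths, Set.image_image, Set.image_image]

/-- weak fundamental inequality. Here simple paths from `i` to `j`
through `u` are encoded as pairs consisting of the segment from `i` to `u` and
the segment from `u` to `j` (walks in the complete graph whose edges lie in `E`,
appending to a simple path). -/
theorem weak_fundamental_inequality
    (E : Finset (Sym2 V)) (α : ℝ) (hα0 : 0 ≤ α) (hα1 : α ≤ 1)
    (i j u : V) (β : ℝ) (hβ0 : 0 ≤ β) (hβ1 : β ≤ 1)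
    (P : Set ((⊤ : SimpleGraph V).Walk i u × (⊤ : SimpleGraph V).Walk u j))
    (P₀ : Set ((⊤ : SimpleGraph V).Walk i j))
    (hP : ∀ p ∈ P, (p.1.append p.2).IsPath ∧ ∀ e ∈ (p.1.append p.2).edges, e ∈ E)
    (hP₀ : ∀ p ∈ P₀, p.IsPath ∧ ∀ e ∈ p.edges, e ∈ E)
    (hdisj : ∀ p ∈ P, p.1.append p.2 ∉ P₀)
    (hunion : β ≤ prPaths E α
      ((fun p => (p.1.append p.2).edges) '' P ∪ SimpleGraph.Walk.edges '' P₀))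
    (hP₀small : prPaths E α (SimpleGraph.Walk.edges '' P₀) ≤ β / 2) :
    β / 2 ≤ prPaths E α ((fun p => p.1.edges) '' P) *
              prPaths E α ((fun p => p.2.edges) '' P) :=
  weak_fundamental_inequality_general E α hα0 hα1 i j u β P P₀ hP hunion hP₀small
end

section
/- Two-edge log-submodularity of proximity to a star center: Let G = (V, E, α) be an information graph, let u, v ∈ V, and let e₁ = u w₁ and e₂ = u w₂ be two distinct vertex pairs incident to u and not in E. Then prox_{G + {e₁, e₂}}(v, u) · prox_G(v, u) ≤ prox_{G + {e₁}}(v, u) · prox_{G + {e₂}}(v, u). -/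
open scoped Classical

variable {V : Type*} [Fintype V] [DecidableEq V]

/-!
Condition on the two new edges: let `A`, `B`, `C`, `D` be the probabilities that `v` reaches `u`
when both `e₁, e₂`, only `e₁`, only `e₂`, or neither of them are added to the sample. The four
proximities are `α²A + α(1-α)(B+C) + (1-α)²D`, `D`, `αB + (1-α)D` and `αC + (1-α)D`, so the claim
reduces to `AD ≤ BC`. Monotonicity gives `D ≤ B` and `D ≤ C`. Both new edges end at `u`, so a path
from `v` to `u` cut at its first visit to `u` uses at most one of them; hence `A + D ≤ B + C`
sample by sample, and `BC - AD ≥ (B - D)(C - D) ≥ 0`.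
-/

section SampleExpect

variable {ι : Type*} [DecidableEq ι]

noncomputable def sampleExpect (E : Finset ι) (α : ℝ) (f : Finset ι → ℝ) : ℝ :=
  ∑ F ∈ E.powerset, α ^ F.card * (1 - α) ^ (E \ F).card * f F

theorem sampleExpect_insert {E : Finset ι} {e : ι} (he : e ∉ E) (α : ℝ) (f : Finset ι → ℝ) :
    sampleExpect (insert e E) α f =
      α * sampleExpect E α (fun F => f (insert e F)) + (1 - α) * sampleExpect E α f := by
  rw [sampleExpect, Finset.sum_powerset_insert he, add_comm, sampleExpect, sampleExpect,
    Finset.mul_sum, Finset.mul_sum]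
  congr 1 <;> refine Finset.sum_congr rfl fun F hF => ?_
  all_goals have heF : e ∉ F := fun h => he (Finset.mem_powerset.1 hF h)
  · rw [Finset.insert_sdiff_insert, Finset.sdiff_insert_of_notMem he,
      Finset.card_insert_of_notMem heF]
    ring
  · rw [Finset.insert_sdiff_of_notMem _ heF,
      Finset.card_insert_of_notMem fun h => he (Finset.mem_sdiff.1 h).1]
    ring

theorem sampleExpect_add (E : Finset ι) (α : ℝ) (f g : Finset ι → ℝ) :
    sampleExpect E α (fun F => f F + g F) = sampleExpect E α f + sampleExpect E α g := by
  simp only [sampleExpect, mul_add, Finset.sum_add_distrib]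

variable {α : ℝ} (hα0 : 0 ≤ α) (hα1 : α ≤ 1)
include hα0 hα1

theorem sampleExpect_mono (E : Finset ι) {f g : Finset ι → ℝ} (hfg : ∀ F, f F ≤ g F) :
    sampleExpect E α f ≤ sampleExpect E α g :=
  Finset.sum_le_sum fun F _ => mul_le_mul_of_nonneg_left (hfg F)
    (mul_nonneg (pow_nonneg hα0 _) (pow_nonneg (sub_nonneg.2 hα1) _))

theorem sampleExpect_nonneg (E : Finset ι) {f : Finset ι → ℝ} (hf : ∀ F, 0 ≤ f F) :
    0 ≤ sampleExpect E α f := by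
  simpa [sampleExpect] using sampleExpect_mono hα0 hα1 E (f := 0) hf

end SampleExpect

theorem SimpleGraph.reachable_or_exists_reachable_insert_of_reachable_union {W : Type*}
    {S T : Set (Sym2 W)} {x u : W} (hT : ∀ t ∈ T, u ∈ t)
    (h : (fromEdgeSet (T ∪ S)).Reachable x u) :
    (fromEdgeSet S).Reachable x u ∨ ∃ t ∈ T, (fromEdgeSet (insert t S)).Reachable x u := by
  obtain ⟨p⟩ := h
  induction p with
  | nil => exact Or.inl .rfl
  | @cons a b _ hab _ ih =>
    obtain ⟨hab | hab, hne⟩ := (fromEdgeSet_adj _).1 hab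
    · rcases Sym2.mem_iff.1 (hT _ hab) with rfl | rfl
      · exact Or.inl .rfl
      · exact Or.inr ⟨_, hab, ((fromEdgeSet_adj _).2 ⟨Set.mem_insert _ _, hne⟩).reachable⟩
    · rcases ih hT with hr | ⟨t, ht, hr⟩
      · exact Or.inl (((fromEdgeSet_adj _).2 ⟨hab, hne⟩).reachable.trans hr)
      · exact Or.inr ⟨t, ht,
          ((fromEdgeSet_adj _).2 ⟨Set.mem_insert_of_mem _ hab, hne⟩).reachable.trans hr⟩


section Reachability

variable {W : Type*}

noncomputable def reachIndicator (x y : W) (F : Finset (Sym2 W)) : ℝ :=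
  if (SimpleGraph.fromEdgeSet (F : Set (Sym2 W))).Reachable x y then 1 else 0

theorem reachIndicator_nonneg (x y : W) (F : Finset (Sym2 W)) : 0 ≤ reachIndicator x y F := by
  unfold reachIndicator
  split_ifs <;> norm_num

theorem reachIndicator_mono (x y : W) {F F' : Finset (Sym2 W)} (h : F ⊆ F') :
    reachIndicator x y F ≤ reachIndicator x y F' := by
  unfold reachIndicator
  have hmono := fun hr : (SimpleGraph.fromEdgeSet (F : Set (Sym2 W))).Reachable x y =>
    hr.mono (SimpleGraph.fromEdgeSet_mono (Finset.coe_subset.2 h))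
  split_ifs <;> simp_all

theorem reachIndicator_insert_insert_add_le [DecidableEq W] {x u : W} {e₁ e₂ : Sym2 W}
    (h₁ : u ∈ e₁) (h₂ : u ∈ e₂) (F : Finset (Sym2 W)) :
    reachIndicator x u (insert e₁ (insert e₂ F)) + reachIndicator x u F ≤
      reachIndicator x u (insert e₁ F) + reachIndicator x u (insert e₂ F) := by
  have hsplit := fun hr : (SimpleGraph.fromEdgeSet ({e₁, e₂} ∪ (F : Set (Sym2 W)))).Reachable x u =>
    SimpleGraph.reachable_or_exists_reachable_insert_of_reachable_union
      (by simp [h₁, h₂]) hr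
  simp only [Set.insert_union, Set.singleton_union, Set.exists_mem_insert,
    Set.mem_singleton_iff, exists_eq_left] at hsplit
  have hmono := fun e (hr : (SimpleGraph.fromEdgeSet (F : Set (Sym2 W))).Reachable x u) =>
    hr.mono (SimpleGraph.fromEdgeSet_mono (Set.subset_insert e _))
  unfold reachIndicator
  push_cast
  split_ifs <;> grind

end Reachability

theorem prox_eq_sampleExpect (E : Finset (Sym2 V)) (α : ℝ) (x y : V) :
    prox E α x y = sampleExpect E α (reachIndicator x y) := by
  refine Finset.sum_congr rfl fun F _ => ?_
  unfold reachIndicator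
  split_ifs <;> simp

theorem mixture_mul_le_mul_mixture {α A B C D : ℝ} (hD : 0 ≤ D) (hB : D ≤ B) (hC : D ≤ C)
    (hA : A + D ≤ B + C) :
    (α * (α * A + (1 - α) * B) + (1 - α) * (α * C + (1 - α) * D)) * D ≤
      (α * B + (1 - α) * D) * (α * C + (1 - α) * D) := by
  have hAD : A * D ≤ B * C := by
    nlinarith [mul_nonneg (sub_nonneg.2 hB) (sub_nonneg.2 hC), mul_le_mul_of_nonneg_right hA hD]
  -- the two sides differ by `α ^ 2 * (B * C - A * D)`
  linear_combination mul_le_mul_of_nonneg_left hAD (sq_nonneg α)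

theorem two_edge_log_submodularity_general
    (E : Finset (Sym2 V)) (α : ℝ) (hα0 : 0 ≤ α) (hα1 : α ≤ 1)
    (u v w₁ w₂ : V)
    (hne : s(u, w₁) ≠ s(u, w₂))
    (he₁ : s(u, w₁) ∉ E) (he₂ : s(u, w₂) ∉ E) :
    prox (insert s(u, w₁) (insert s(u, w₂) E)) α v u * prox E α v u ≤
      prox (insert s(u, w₁) E) α v u * prox (insert s(u, w₂) E) α v u := by
  have he₁' : s(u, w₁) ∉ insert s(u, w₂) E := by simp [hne, he₁]
  simp only [prox_eq_sampleExpect, sampleExpect_insert he₁', sampleExpect_insert he₁,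
    sampleExpect_insert he₂]
  apply mixture_mul_le_mul_mixture
  · exact sampleExpect_nonneg hα0 hα1 E (reachIndicator_nonneg v u)
  · exact sampleExpect_mono hα0 hα1 E fun F => reachIndicator_mono v u (Finset.subset_insert _ F)
  · exact sampleExpect_mono hα0 hα1 E fun F => reachIndicator_mono v u (Finset.subset_insert _ F)
  · rw [← sampleExpect_add, ← sampleExpect_add]
    exact sampleExpect_mono hα0 hα1 E
      (reachIndicator_insert_insert_add_le (Sym2.mem_mk_left u w₁) (Sym2.mem_mk_left u w₂))

/-- two-edge log-submodularity of proximity towards a star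
center `u`. -/
theorem two_edge_log_submodularity
    (E : Finset (Sym2 V)) (α : ℝ) (hα0 : 0 ≤ α) (hα1 : α ≤ 1)
    (u v w₁ w₂ : V) (hw₁ : w₁ ≠ u) (hw₂ : w₂ ≠ u)
    (hne : s(u, w₁) ≠ s(u, w₂))
    (he₁ : s(u, w₁) ∉ E) (he₂ : s(u, w₂) ∉ E) :
    prox (insert s(u, w₁) (insert s(u, w₂) E)) α v u * prox E α v u ≤
      prox (insert s(u, w₁) E) α v u * prox (insert s(u, w₂) E) α v u :=
  two_edge_log_submodularity_general E α hα0 hα1 u v w₁ w₂ hne he₁ he₂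
end

section
/- Monotonicity and submodularity of g_v: Let G = (V, E, α) be an information graph, let u, v ∈ V, and let E^u = {uw : w ∈ V, uw ∉ E} be the set of potential new edges incident to u. Define g_v : 2^{E^u} → ℝ by g_v(S) = log prox_{G+S}(v, u). Then g_v is monotone (S ⊆ T implies g_v(S) ≤ g_v(T)) and submodular: for all S ⊆ T ⊆ E^u and all e ∈ E^u, g_v(T ∪ {e}) − g_v(T) ≤ g_v(S ∪ {e}) − g_v(S); equivalently, prox_{G+T+e}(v, u) · prox_{G+S}(v, u) ≤ prox_{G+S+e}(v, u) · prox_{G+T}(v, u). (For the logarithmic form, assume G is connected and α > 0 so that all proximities are positive.) -/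
open scoped Classical

variable {V : Type*} [Fintype V] [DecidableEq V]

/-!
Condition on the set `F ⊆ E` of retained old edges. Every new edge is incident to `u`, so `v` is
joined to `u` after adding the retained new edges `G` iff `F` already joins them, or `G` contains
an edge `uw` with `w` in the component of `v` in `F`. Hence
`prox_{G+S}(v, u) = ∑_F Pr(F) (1 - m_F(S))`, where `m_F(S)` is `0` if `F` joins `v` to `u` and
`(1 - α) ^ d_F(S)` otherwise, `d_F(S)` counting the edges of `S` that reach the component of `v`.
So `m_F` is antitone in `S`, and adding an edge `e ∉ S` multiplies `m_F(S)` by a factor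
`g_F ∈ [0, 1]` that does not depend on `S`. Monotonicity follows at once; for submodularity,
symmetrising the double sum over pairs `(F, F')` leaves an inequality that is affine in
`(g_F, g_F')`, hence only has to be checked at the four corners.
-/

open Finset SimpleGraph

section Bernoulli

variable {ι : Type*} [DecidableEq ι]

noncomputable def retainProb (A : Finset ι) (α : ℝ) (F : Finset ι) : ℝ :=
  α ^ #F * (1 - α) ^ #(A \ F)

noncomputable def bernoulliProb (A : Finset ι) (α : ℝ) (P : Finset ι → Prop) [DecidablePred P] :
    ℝ :=
  ∑ F ∈ A.powerset, if P F then retainProb A α F else 0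

variable {A B : Finset ι} {α : ℝ} {P Q : Finset ι → Prop} [DecidablePred P] [DecidablePred Q]

lemma retainProb_nonneg (hα0 : 0 ≤ α) (hα1 : α ≤ 1) (F : Finset ι) : 0 ≤ retainProb A α F := by
  have : 0 ≤ 1 - α := by linarith
  unfold retainProb
  positivity

lemma sum_retainProb (A : Finset ι) (α : ℝ) : ∑ F ∈ A.powerset, retainProb A α F = 1 := by
  calc ∑ F ∈ A.powerset, retainProb A α F
      = ∑ F ∈ A.powerset, α ^ #F * (1 - α) ^ (#A - #F) :=
        sum_congr rfl fun F hF => by rw [retainProb, card_sdiff_of_subset (mem_powerset.1 hF)]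
    _ = 1 := by rw [sum_pow_mul_eq_add_pow]; simp

lemma retainProb_union (hAB : Disjoint A B) {F G : Finset ι} (hF : F ⊆ A) (hG : G ⊆ B) :
    retainProb (A ∪ B) α (F ∪ G) = retainProb A α F * retainProb B α G := by
  have hFG : Disjoint F G := disjoint_of_subset_left hF (disjoint_of_subset_right hG hAB)
  have hcard : #((A ∪ B) \ (F ∪ G)) = #(A \ F) + #(B \ G) := by
    rw [card_sdiff_of_subset (union_subset_union hF hG), card_union_of_disjoint hAB,
      card_union_of_disjoint hFG, card_sdiff_of_subset hF, card_sdiff_of_subset hG]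
    have := card_le_card hF
    have := card_le_card hG
    omega
  rw [retainProb, retainProb, retainProb, hcard, card_union_of_disjoint hFG, pow_add, pow_add]
  ring

lemma bernoulliProb_congr (h : ∀ F ⊆ A, P F ↔ Q F) : bernoulliProb A α P = bernoulliProb A α Q :=
  sum_congr rfl fun F hF => if_congr (h F (mem_powerset.1 hF)) rfl rfl

lemma bernoulliProb_of_forall (h : ∀ F ⊆ A, P F) : bernoulliProb A α P = 1 := by
  rw [← sum_retainProb A α]
  exact sum_congr rfl fun F hF => if_pos (h F (mem_powerset.1 hF))

lemma bernoulliProb_not : bernoulliProb A α (fun F => ¬P F) = 1 - bernoulliProb A α P := by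
  rw [← sum_retainProb A α, bernoulliProb, bernoulliProb, ← sum_sub_distrib]
  exact sum_congr rfl fun F _ => by split_ifs <;> simp_all

lemma bernoulliProb_nonneg (hα0 : 0 ≤ α) (hα1 : α ≤ 1) : 0 ≤ bernoulliProb A α P :=
  sum_nonneg fun F _ => by split_ifs <;> simp [retainProb_nonneg hα0 hα1]

lemma bernoulliProb_pos (hα0 : 0 < α) (hα1 : α ≤ 1) (hA : P A) : 0 < bernoulliProb A α P := by
  refine sum_pos' (fun F _ => by split_ifs <;> simp [retainProb_nonneg hα0.le hα1])
    ⟨A, mem_powerset_self A, ?_⟩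
  simpa [hA, retainProb] using pow_pos hα0 #A

lemma bernoulliProb_union (hAB : Disjoint A B) :
    bernoulliProb (A ∪ B) α P =
      ∑ F ∈ A.powerset, retainProb A α F * bernoulliProb B α (fun G => P (F ∪ G)) := by
  have hsplit : bernoulliProb (A ∪ B) α P = ∑ x ∈ A.powerset ×ˢ B.powerset,
      if P (x.1 ∪ x.2) then retainProb (A ∪ B) α (x.1 ∪ x.2) else 0 := by
    refine sum_nbij' (fun H => (H ∩ A, H ∩ B)) (fun x => x.1 ∪ x.2) ?_ ?_ ?_ ?_ ?_
    · intro H _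
      simp only [mem_product, mem_powerset]
      exact ⟨inter_subset_right, inter_subset_right⟩
    · rintro ⟨F, G⟩ hFG
      rw [mem_product, mem_powerset, mem_powerset] at hFG
      exact mem_powerset.2 (union_subset_union hFG.1 hFG.2)
    · intro H hH
      simp only [← inter_union_distrib_left, inter_eq_left.2 (mem_powerset.1 hH)]
    · rintro ⟨F, G⟩ hx
      obtain ⟨hF, hG⟩ : F ⊆ A ∧ G ⊆ B := by rwa [mem_product, mem_powerset, mem_powerset] at hx
      simp only [union_inter_distrib_right, inter_eq_left.2 hF, inter_eq_left.2 hG,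
        disjoint_iff_inter_eq_empty.1 (disjoint_of_subset_left hF hAB),
        disjoint_iff_inter_eq_empty.1 (disjoint_of_subset_left hG hAB.symm), union_empty,
        empty_union]
    · intro H hH
      simp only [← inter_union_distrib_left, inter_eq_left.2 (mem_powerset.1 hH)]
  rw [hsplit, sum_product]
  refine sum_congr rfl fun F hF => ?_
  rw [bernoulliProb, mul_sum]
  refine sum_congr rfl fun G hG => ?_
  rw [retainProb_union hAB (mem_powerset.1 hF) (mem_powerset.1 hG), mul_ite, mul_zero]

lemma bernoulliProb_disjoint {D : Finset ι} (hD : D ⊆ A) :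
    bernoulliProb A α (fun F => Disjoint F D) = (1 - α) ^ #D := by
  have hdisj : Disjoint D (A \ D) := disjoint_sdiff
  rw [← union_sdiff_of_subset hD, bernoulliProb_union hdisj]
  have hinner : ∀ F ∈ D.powerset,
      bernoulliProb (A \ D) α (fun G => Disjoint (F ∪ G) D) = if F = ∅ then 1 else 0 := by
    intro F hF
    split_ifs with hF0
    · refine bernoulliProb_of_forall fun G hG => ?_
      rw [hF0, empty_union]
      exact disjoint_of_subset_left hG sdiff_disjoint
    · have hF' : ¬Disjoint F D := fun h =>
        hF0 (disjoint_self_iff_empty F |>.1 (disjoint_of_subset_right (mem_powerset.1 hF) h))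
      exact sum_eq_zero fun G _ =>
        if_neg fun h => hF' (disjoint_of_subset_left subset_union_left h)
  rw [sum_congr rfl fun F hF => by rw [hinner F hF]]
  simp [retainProb]

end Bernoulli

section Correlation

variable {ι : Type*}

lemma sum_mul_sum_le_of_symm_le {P : Finset ι} {p f₁ f₂ g₁ g₂ : ι → ℝ} (hp : ∀ i ∈ P, 0 ≤ p i)
    (h : ∀ i ∈ P, ∀ j ∈ P, f₁ i * f₂ j + f₁ j * f₂ i ≤ g₁ i * g₂ j + g₁ j * g₂ i) :
    (∑ i ∈ P, p i * f₁ i) * (∑ i ∈ P, p i * f₂ i) ≤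
      (∑ i ∈ P, p i * g₁ i) * (∑ i ∈ P, p i * g₂ i) := by
  have hsymm : ∀ f g : ι → ℝ, 2 * ((∑ i ∈ P, p i * f i) * (∑ i ∈ P, p i * g i)) =
      ∑ i ∈ P, ∑ j ∈ P, p i * p j * (f i * g j + f j * g i) := by
    intro f g
    rw [sum_mul_sum, two_mul]
    nth_rw 2 [sum_comm]
    rw [← sum_add_distrib]
    refine sum_congr rfl fun i _ => ?_
    rw [← sum_add_distrib]
    exact sum_congr rfl fun j _ => by ring
  have hle := sum_le_sum fun i hi => sum_le_sum fun j hj =>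
    mul_le_mul_of_nonneg_left (h i hi j hj) (mul_nonneg (hp i hi) (hp j hj))
  rw [← hsymm, ← hsymm] at hle
  linarith

lemma sum_one_sub_mul_sum_le {P : Finset ι} {p a b g : ι → ℝ} (hp : ∀ i ∈ P, 0 ≤ p i)
    (hb : ∀ i ∈ P, 0 ≤ b i) (hba : ∀ i ∈ P, b i ≤ a i) (ha : ∀ i ∈ P, a i ≤ 1)
    (hg₀ : ∀ i ∈ P, 0 ≤ g i) (hg₁ : ∀ i ∈ P, g i ≤ 1) :
    (∑ i ∈ P, p i * (1 - g i * b i)) * (∑ i ∈ P, p i * (1 - a i)) ≤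
      (∑ i ∈ P, p i * (1 - g i * a i)) * (∑ i ∈ P, p i * (1 - b i)) := by
  refine sum_mul_sum_le_of_symm_le hp fun i hi j hj => ?_
  -- The difference of the two sides is affine in `(g i, g j)` and vanishes at `(1, 1)`,
  -- so it is the bilinear interpolation of its values at the other three corners.
  have corner₀₀ : 0 ≤ (a i - b i) + (a j - b j) := by linarith [hba i hi, hba j hj]
  have corner₁₀ : 0 ≤ a j * (1 - b i) - b j * (1 - a i) := by
    nlinarith [hba i hi, hba j hj, ha i hi, hb j hj]
  have corner₀₁ : 0 ≤ a i * (1 - b j) - b i * (1 - a j) := by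
    nlinarith [hba i hi, hba j hj, ha j hj, hb i hi]
  have hgi : 0 ≤ 1 - g i := by linarith [hg₁ i hi]
  have hgj : 0 ≤ 1 - g j := by linarith [hg₁ j hj]
  linarith [mul_nonneg (mul_nonneg hgi hgj) corner₀₀,
    mul_nonneg (mul_nonneg (hg₀ i hi) hgj) corner₁₀,
    mul_nonneg (mul_nonneg hgi (hg₀ j hj)) corner₀₁]

end Correlation

section Star

variable {W : Type*} {u v : W}

lemma reachable_union_star_iff {F G : Set (Sym2 W)} (hG : ∀ e ∈ G, u ∈ e) :
    (fromEdgeSet (F ∪ G)).Reachable v u ↔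
      (fromEdgeSet F).Reachable v u ∨ ∃ w, s(u, w) ∈ G ∧ (fromEdgeSet F).Reachable v w := by
  have hmono : fromEdgeSet F ≤ fromEdgeSet (F ∪ G) := fromEdgeSet_mono Set.subset_union_left
  constructor
  · rintro ⟨p⟩
    by_contra! hno
    obtain ⟨d, -, hfst, hsnd⟩ :=
      p.exists_boundary_dart {x | (fromEdgeSet F).Reachable v x} (Reachable.refl v) hno.1
    obtain ⟨hmem | hmem, hne⟩ := (fromEdgeSet_adj _).1 d.adj
    · exact hsnd (hfst.trans ((fromEdgeSet_adj F).2 ⟨hmem, hne⟩).reachable)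
    · rcases Sym2.mem_iff.1 (hG _ hmem) with rfl | rfl
      · exact hno.1 hfst
      · exact hno.2 d.fst (Sym2.eq_swap ▸ hmem) hfst
  · rintro (h | ⟨w, hw, hvw⟩)
    · exact h.mono hmono
    · by_cases hwu : w = u
      · exact hwu ▸ hvw.mono hmono
      · refine (hvw.mono hmono).trans (Adj.reachable ((fromEdgeSet_adj _).2 ⟨?_, hwu⟩))
        exact Or.inr (Sym2.eq_swap ▸ hw)

variable {α : ℝ}

/-- Conditionally on the retained old edges being `F`, the probability that a sample of the
star `S` at `u` leaves `v` and `u` disconnected. -/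
noncomputable def missProb (α : ℝ) (u v : W) (F : Set (Sym2 W)) (S : Finset (Sym2 W)) : ℝ :=
  if (fromEdgeSet F).Reachable v u then 0
  else (1 - α) ^ #{e ∈ S | ∃ w, e = s(u, w) ∧ (fromEdgeSet F).Reachable v w}

lemma bernoulliProb_not_reachable_union_star [DecidableEq W] (F : Set (Sym2 W))
    [DecidablePred fun G : Finset (Sym2 W) => (fromEdgeSet (F ∪ G)).Reachable v u]
    {S : Finset (Sym2 W)} (hS : ∀ e ∈ S, u ∈ e) :
    bernoulliProb S α (fun G => ¬(fromEdgeSet (F ∪ G)).Reachable v u) = missProb α u v F S := by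
  have hiff : ∀ G ⊆ S, (fromEdgeSet (F ∪ G)).Reachable v u ↔
      (fromEdgeSet F).Reachable v u ∨ ∃ w, s(u, w) ∈ G ∧ (fromEdgeSet F).Reachable v w :=
    fun G hG => reachable_union_star_iff fun e he => hS e (hG he)
  rw [missProb]
  split_ifs with hvu
  · rw [bernoulliProb_not, bernoulliProb_of_forall fun G hG => (hiff G hG).2 (Or.inl hvu), sub_self]
  · rw [← bernoulliProb_disjoint (filter_subset _ S)]
    refine bernoulliProb_congr fun G hG => ?_
    rw [hiff G hG, Finset.disjoint_left]
    simp only [hvu, false_or, not_exists, not_and, mem_filter]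
    exact ⟨fun h e he _ w hew => h w (hew ▸ he), fun h w hw => h hw (hG hw) w rfl⟩

lemma missProb_nonneg (hα1 : α ≤ 1) (F : Set (Sym2 W)) (S : Finset (Sym2 W)) :
    0 ≤ missProb α u v F S := by
  have : 0 ≤ 1 - α := by linarith
  unfold missProb
  split_ifs <;> positivity

lemma missProb_le_one (hα0 : 0 ≤ α) (hα1 : α ≤ 1) (F : Set (Sym2 W)) (S : Finset (Sym2 W)) :
    missProb α u v F S ≤ 1 := by
  unfold missProb
  split_ifs
  · exact zero_le_one
  · exact pow_le_one₀ (by linarith) (by linarith)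

lemma missProb_anti (hα0 : 0 ≤ α) (hα1 : α ≤ 1) (F : Set (Sym2 W)) {S T : Finset (Sym2 W)}
    (hST : S ⊆ T) : missProb α u v F T ≤ missProb α u v F S := by
  unfold missProb
  split_ifs
  · exact le_rfl
  · exact pow_le_pow_of_le_one (by linarith) (by linarith)
      (card_le_card (filter_subset_filter _ hST))

lemma missProb_insert [DecidableEq W] (F : Set (Sym2 W)) {S : Finset (Sym2 W)} {e : Sym2 W}
    (he : e ∉ S) :
    missProb α u v F (insert e S) =
      (if ∃ w, e = s(u, w) ∧ (fromEdgeSet F).Reachable v w then 1 - α else 1) *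
        missProb α u v F S := by
  unfold missProb
  by_cases hvu : (fromEdgeSet F).Reachable v u
  · rw [if_pos hvu, if_pos hvu, mul_zero]
  · rw [if_neg hvu, if_neg hvu, filter_insert]
    split_ifs with hnew
    · rw [card_insert_of_notMem fun h => he (mem_filter.1 h).1, pow_succ']
    · rw [one_mul]

end Star

section Proximity

variable {E S T : Finset (Sym2 V)} {α : ℝ} {u v : V}

lemma prox_pos (hα0 : 0 < α) (hα1 : α ≤ 1) {A : Finset (Sym2 V)}
    (h : (fromEdgeSet (A : Set (Sym2 V))).Reachable u v) : 0 < prox A α u v :=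
  bernoulliProb_pos hα0 hα1 h

lemma prox_nonneg (hα0 : 0 ≤ α) (hα1 : α ≤ 1) (A : Finset (Sym2 V)) (u v : V) :
    0 ≤ prox A α u v :=
  bernoulliProb_nonneg hα0 hα1

lemma prox_union_star (hES : Disjoint E S) (hS : ∀ e ∈ S, u ∈ e) :
    prox (E ∪ S) α v u = ∑ F ∈ E.powerset, retainProb E α F * (1 - missProb α u v F S) := by
  change bernoulliProb (E ∪ S) α (fun H => (fromEdgeSet (H : Set (Sym2 V))).Reachable v u) = _
  rw [bernoulliProb_union hES]
  refine sum_congr rfl fun F _ => ?_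
  rw [← bernoulliProb_not_reachable_union_star _ hS, bernoulliProb_not, sub_sub_cancel]
  exact congrArg _ (bernoulliProb_congr fun G _ => by rw [coe_union])

lemma prox_le_prox_of_subset (hα0 : 0 ≤ α) (hα1 : α ≤ 1) (hET : Disjoint E T)
    (hT : ∀ e ∈ T, u ∈ e) (hST : S ⊆ T) : prox (E ∪ S) α v u ≤ prox (E ∪ T) α v u := by
  rw [prox_union_star (disjoint_of_subset_right hST hET) fun e he => hT e (hST he),
    prox_union_star hET hT]
  gcongr with F
  · exact retainProb_nonneg hα0 hα1 F
  · exact missProb_anti hα0 hα1 _ hST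

lemma prox_insert_mul_le (hα0 : 0 ≤ α) (hα1 : α ≤ 1) {e : Sym2 V} (hET : Disjoint E (insert e T))
    (hT : ∀ e' ∈ insert e T, u ∈ e') (hST : S ⊆ T) :
    prox (E ∪ insert e T) α v u * prox (E ∪ S) α v u ≤
      prox (E ∪ insert e S) α v u * prox (E ∪ T) α v u := by
  have hS : S ⊆ insert e T := hST.trans (subset_insert e T)
  have hmono {X Y : Finset (Sym2 V)} (hXY : X ⊆ Y) (hY : Y ⊆ insert e T) :
      prox (E ∪ X) α v u ≤ prox (E ∪ Y) α v u :=
    prox_le_prox_of_subset hα0 hα1 (disjoint_of_subset_right hY hET) (fun e he => hT e (hY he)) hXY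
  by_cases heT : e ∈ T
  · rw [insert_eq_of_mem heT, mul_comm]
    exact mul_le_mul_of_nonneg_right (hmono (subset_insert e S) (insert_subset_insert e hST))
      (prox_nonneg hα0 hα1 _ v u)
  have heS : e ∉ S := fun h => heT (hST h)
  have hstar {X : Finset (Sym2 V)} (hX : X ⊆ insert e T) :
      prox (E ∪ X) α v u = ∑ F ∈ E.powerset, retainProb E α F * (1 - missProb α u v F X) :=
    prox_union_star (disjoint_of_subset_right hX hET) fun e he => hT e (hX he)
  rw [hstar subset_rfl, hstar hS, hstar (insert_subset_insert e hST), hstar (subset_insert e T)]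
  simp only [missProb_insert _ heT, missProb_insert _ heS]
  exact sum_one_sub_mul_sum_le (fun F _ => retainProb_nonneg hα0 hα1 F)
    (fun F _ => missProb_nonneg hα1 _ _) (fun F _ => missProb_anti hα0 hα1 _ hST)
    (fun F _ => missProb_le_one hα0 hα1 _ _) (fun F _ => by split_ifs <;> linarith)
    (fun F _ => by split_ifs <;> linarith)

end Proximity

/-- monotonicity and submodularity of
`g_v(S) = log prox_{G+S}(v, u)` over sets of new edges incident to `u`. -/
theorem gv_monotone_submodular
    (E : Finset (Sym2 V)) (α : ℝ) (hα0 : 0 < α) (hα1 : α ≤ 1)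
    (hconn : (SimpleGraph.fromEdgeSet (E : Set (Sym2 V))).Connected)
    (u v : V) :
    (∀ S T : Finset (Sym2 V),
      (∀ e ∈ T, e ∉ E ∧ ∃ w : V, w ≠ u ∧ e = s(u, w)) → S ⊆ T →
      Real.log (prox (E ∪ S) α v u) ≤ Real.log (prox (E ∪ T) α v u)) ∧
    (∀ (S T : Finset (Sym2 V)) (e : Sym2 V),
      (∀ e' ∈ T, e' ∉ E ∧ ∃ w : V, w ≠ u ∧ e' = s(u, w)) → S ⊆ T →
      (e ∉ E ∧ ∃ w : V, w ≠ u ∧ e = s(u, w)) →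
      (Real.log (prox (E ∪ insert e T) α v u) - Real.log (prox (E ∪ T) α v u) ≤
        Real.log (prox (E ∪ insert e S) α v u) - Real.log (prox (E ∪ S) α v u)) ∧
      prox (E ∪ insert e T) α v u * prox (E ∪ S) α v u ≤
        prox (E ∪ insert e S) α v u * prox (E ∪ T) α v u) := by
  have hpos (S : Finset (Sym2 V)) : 0 < prox (E ∪ S) α v u :=
    prox_pos hα0 hα1 ((hconn.preconnected v u).mono (fromEdgeSet_mono (by simp)))
  have hstar {T : Finset (Sym2 V)} (hT : ∀ e ∈ T, e ∉ E ∧ ∃ w : V, w ≠ u ∧ e = s(u, w)) :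
      Disjoint E T ∧ ∀ e ∈ T, u ∈ e := by
    refine ⟨Finset.disjoint_right.2 fun e he => (hT e he).1, fun e he => ?_⟩
    obtain ⟨w, -, rfl⟩ := (hT e he).2
    exact Sym2.mem_mk_left u w
  refine ⟨fun S T hT hST => ?_, fun S T e hT hST he => ?_⟩
  · obtain ⟨hET, huT⟩ := hstar hT
    exact Real.log_le_log (hpos S) (prox_le_prox_of_subset hα0.le hα1 hET huT hST)
  · obtain ⟨hET, huT⟩ := hstar (T := insert e T) (forall_mem_insert _ _ _ |>.2 ⟨he, hT⟩)
    have hprod := prox_insert_mul_le hα0.le hα1 hET huT hST (v := v)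
    refine ⟨?_, hprod⟩
    have hlog := Real.log_le_log (mul_pos (hpos _) (hpos _)) hprod
    rw [Real.log_mul (hpos _).ne' (hpos _).ne', Real.log_mul (hpos _).ne' (hpos _).ne'] at hlog
    linarith
end
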